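/- arXiv:2412.14665 — 6 statements merged into one kernel-verified Lean document; each statement's English description precedes it below -/
import Mathlib

section
/- Let B be SPD, u* ≠ 0, x* = B^{1/2}u*/‖B^{1/2}u*‖, and σ = ‖u*‖²_{B⁻¹}/‖u*‖². Then ‖(B⁻¹ − σI)x*‖²/σ² = 1 − ‖u*‖⁴/(‖u*‖²_B ‖u*‖²_{B⁻¹}), i.e., it equals cos²φ where sin φ = ‖u*‖²/(‖u*‖_B‖u*‖_{B⁻¹}). -/
open Matrix

theorem stmt_3 {n : ℕ} (B S : Matrix (Fin n) (Fin n) ℝ) (hB : B.PosDef)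
    (hS : S.PosDef) (hSB : S * S = B)
    (u : Fin n → ℝ) (hu : u ≠ 0)
    (xstar : Fin n → ℝ)
    (hxstar : xstar = (Real.sqrt (u ⬝ᵥ B.mulVec u))⁻¹ • S.mulVec u)
    (σ : ℝ) (hσ : σ = (u ⬝ᵥ B⁻¹.mulVec u) / (u ⬝ᵥ u)) :
    ((B⁻¹.mulVec xstar - σ • xstar) ⬝ᵥ (B⁻¹.mulVec xstar - σ • xstar)) / σ ^ 2 =
      1 - (u ⬝ᵥ u) ^ 2 / ((u ⬝ᵥ B.mulVec u) * (u ⬝ᵥ B⁻¹.mulVec u)) := by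
  have hSsym : Sᵀ = S := hS.1
  have hSunit : IsUnit S.det := isUnit_iff_ne_zero.mpr hS.det_pos.ne'
  have hSinv_symm : (S⁻¹)ᵀ = S⁻¹ := by
    rw [Matrix.transpose_nonsing_inv, hSsym]
  have hBinv : B⁻¹ = S⁻¹ * S⁻¹ := by
    rw [← hSB, Matrix.mul_inv_rev]
  have hSS : S⁻¹ * S = 1 := Matrix.nonsing_inv_mul S hSunit
  -- dot product moves
  have hmove : ∀ (A : Matrix (Fin n) (Fin n) ℝ), Aᵀ = A →
      ∀ v w : Fin n → ℝ, A.mulVec v ⬝ᵥ w = v ⬝ᵥ A.mulVec w := by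
    intro A hA v w
    rw [Matrix.dotProduct_mulVec, ← Matrix.mulVec_transpose, hA]
  set a := u ⬝ᵥ B.mulVec u with ha_def
  set b := u ⬝ᵥ B⁻¹.mulVec u with hb_def
  set t := u ⬝ᵥ u with ht_def
  have ha : 0 < a := hB.re_dotProduct_pos hu
  have hb : 0 < b := hB.inv.re_dotProduct_pos hu
  have ht : 0 < t := by
    have : (0:ℝ) < u ⬝ᵥ u := by
      have := dotProduct_self_eq_zero (v := u)
      have h2 : u ⬝ᵥ u ≠ 0 := fun h => hu (this.mp h)
      have h3 : 0 ≤ u ⬝ᵥ u := Finset.sum_nonneg fun i _ => mul_self_nonneg _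
      exact lt_of_le_of_ne h3 (Ne.symm h2)
    exact this
  -- key dot product identities
  have hSuSu : S.mulVec u ⬝ᵥ S.mulVec u = a := by
    rw [hmove S hSsym, Matrix.mulVec_mulVec, hSB]
  have hSiSi : S⁻¹.mulVec u ⬝ᵥ S⁻¹.mulVec u = b := by
    rw [hmove _ hSinv_symm, Matrix.mulVec_mulVec, ← hBinv]
  have hSiS : S⁻¹.mulVec u ⬝ᵥ S.mulVec u = t := by
    rw [hmove _ hSinv_symm, Matrix.mulVec_mulVec, hSS, Matrix.one_mulVec]
  have hSSi : S.mulVec u ⬝ᵥ S⁻¹.mulVec u = t := by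
    rw [dotProduct_comm, hSiS]
  have hBix : B⁻¹.mulVec (S.mulVec u) = S⁻¹.mulVec u := by
    rw [Matrix.mulVec_mulVec, hBinv, Matrix.mul_assoc, hSS, Matrix.mul_one]
  set c : ℝ := (Real.sqrt a)⁻¹ with hc_def
  have hnum : (B⁻¹.mulVec xstar - σ • xstar) ⬝ᵥ (B⁻¹.mulVec xstar - σ • xstar)
      = c^2 * (b - 2 * σ * t + σ^2 * a) := by
    rw [hxstar, Matrix.mulVec_smul, hBix, smul_smul]
    simp only [sub_dotProduct, dotProduct_sub, smul_dotProduct,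
      dotProduct_smul, hSuSu, hSiSi, hSiS, hSSi, smul_eq_mul]
    ring
  have hc2 : c^2 = a⁻¹ := by
    rw [hc_def, ← Real.sqrt_inv, Real.sq_sqrt (inv_nonneg.mpr ha.le)]
  rw [hnum, hc2, hσ]
  field_simp
  ring
end

section
/- Let B be SPD, u* ≠ 0, x* = B^{1/2}u*/‖B^{1/2}u*‖, and define cos φ via sin φ = ‖u*‖²/(‖u*‖_B‖u*‖_{B⁻¹}) with φ ∈ (0,π/2]. Then for every unit vector x ∈ ℝⁿ with arccos(xᵀx*) < φ, it holds that xᵀB⁻¹x* ≥ (‖u*‖²_{B⁻¹}/‖u*‖²)·(xᵀx* − cos φ). -/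
/-
Write `x* = e`, `w = B⁻¹x*` and `s = ⟪w, e⟫ / ‖w‖ = sin φ`. Splitting `x` and `w` into their
components along `e` and orthogonal to `e`, Cauchy–Schwarz on the orthogonal parts gives
`⟪x, w⟫ ≥ ‖w‖ (c s - √(1 - c²) √(1 - s²))` with `c = ⟪x, e⟫`, i.e. `⟪x, w⟫ ≥ ‖w‖ cos (θ + ψ)` where
`cos θ = c` and `cos ψ = s`. The elementary inequality `cos (θ + ψ) ≥ (c - cos φ) / s` then
yields the claim.
-/

open Matrix

open scoped RealInnerProductSpace

theorem mulVec_dotProduct_mulVec {m n k α : Type*} [Fintype m] [Fintype n] [Fintype k]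
    [CommSemiring α] (A : Matrix m n α) (C : Matrix m k α) (x : n → α) (y : k → α) :
    (A *ᵥ x) ⬝ᵥ (C *ᵥ y) = x ⬝ᵥ (Aᵀ * C) *ᵥ y := by
  rw [dotProduct_mulVec, vecMul_mulVec, ← dotProduct_mulVec]

theorem EuclideanSpace.real_inner_toLp {ι : Type*} [Fintype ι] (x y : ι → ℝ) :
    ⟪WithLp.toLp 2 x, WithLp.toLp 2 y⟫ = x ⬝ᵥ y := by
  rw [EuclideanSpace.inner_toLp_toLp, star_trivial, dotProduct_comm]

theorem EuclideanSpace.norm_toLp {ι : Type*} [Fintype ι] (x : ι → ℝ) :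
    ‖WithLp.toLp 2 x‖ = √(x ⬝ᵥ x) := by
  rw [← real_inner_toLp, real_inner_self_eq_norm_sq, Real.sqrt_sq (norm_nonneg _)]

theorem div_sub_sqrt_le_mul_sub_sqrt_mul_sqrt {c s : ℝ} (hc : c ^ 2 ≤ 1) (hs : 0 < s)
    (hs1 : s ≤ 1) :
    (c - √(1 - s ^ 2)) / s ≤ c * s - √(1 - c ^ 2) * √(1 - s ^ 2) := by
  set p := √(1 - c ^ 2)
  set t := √(1 - s ^ 2)
  have hp2 : p ^ 2 = 1 - c ^ 2 := Real.sq_sqrt (by linarith)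
  have ht2 : t ^ 2 = 1 - s ^ 2 := Real.sq_sqrt (by nlinarith)
  -- `(p, c)` and `(s, t)` are unit vectors of `ℝ²`
  have hpt : p * s + c * t ≤ 1 := by nlinarith [sq_nonneg (p * t - c * s)]
  have hgap : (c * s - p * t) * s - (c - t) = t * (1 - (p * s + c * t)) := by
    linear_combination c * ht2
  rw [div_le_iff₀ hs]
  linarith [mul_nonneg (Real.sqrt_nonneg (1 - s ^ 2)) (sub_nonneg.2 hpt)]

section InnerProductSpace

variable {E : Type*} [NormedAddCommGroup E] [InnerProductSpace ℝ E]

theorem inner_mul_inner_sub_sqrt_mul_sqrt_le_inner {e : E} (he : ‖e‖ = 1) (x w : E) :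
    ⟪x, e⟫ * ⟪w, e⟫ - √(‖x‖ ^ 2 - ⟪x, e⟫ ^ 2) * √(‖w‖ ^ 2 - ⟪w, e⟫ ^ 2) ≤ ⟪x, w⟫ := by
  have hee : ⟪e, e⟫ = 1 := by rw [real_inner_self_eq_norm_sq, he, one_pow]
  have hinner (y z : E) : ⟪y - ⟪y, e⟫ • e, z - ⟪z, e⟫ • e⟫ = ⟪y, z⟫ - ⟪y, e⟫ * ⟪z, e⟫ := by
    simp only [inner_sub_left, inner_sub_right, real_inner_smul_left, real_inner_smul_right,
      hee, real_inner_comm e]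
    ring
  have hnorm (y : E) : ‖y - ⟪y, e⟫ • e‖ = √(‖y‖ ^ 2 - ⟪y, e⟫ ^ 2) := by
    rw [← real_inner_self_eq_norm_sq, pow_two ⟪y, e⟫, ← hinner, real_inner_self_eq_norm_sq,
      Real.sqrt_sq (norm_nonneg _)]
  have hcs := neg_le_of_abs_le (abs_real_inner_le_norm (x - ⟪x, e⟫ • e) (w - ⟪w, e⟫ • e))
  rw [hnorm, hnorm, hinner] at hcs
  linarith

theorem norm_sq_div_inner_mul_sub_le_inner {e x w : E} (he : ‖e‖ = 1) (hx : ‖x‖ = 1)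
    (hwe : 0 < ⟪w, e⟫) :
    ‖w‖ ^ 2 / ⟪w, e⟫ * (⟪x, e⟫ - √(1 - (⟪w, e⟫ / ‖w‖) ^ 2)) ≤ ⟪x, w⟫ := by
  have hwe_le : ⟪w, e⟫ ≤ ‖w‖ := by simpa [he] using real_inner_le_norm w e
  have hw : 0 < ‖w‖ := hwe.trans_le hwe_le
  set s := ⟪w, e⟫ / ‖w‖ with hs_def
  have hs : 0 < s := div_pos hwe hw
  have hs1 : s ≤ 1 := (div_le_one hw).2 hwe_le
  have hc : ⟪x, e⟫ ^ 2 ≤ 1 := by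
    rw [sq_le_one_iff_abs_le_one]
    simpa [he, hx] using abs_real_inner_le_norm x e
  have hperp : √(‖w‖ ^ 2 - ⟪w, e⟫ ^ 2) = ‖w‖ * √(1 - s ^ 2) := by
    rw [← Real.sqrt_sq hw.le, ← Real.sqrt_mul (sq_nonneg _), Real.sqrt_sq hw.le, hs_def]
    congr 1
    field_simp
  calc ‖w‖ ^ 2 / ⟪w, e⟫ * (⟪x, e⟫ - √(1 - s ^ 2))
      = ‖w‖ * ((⟪x, e⟫ - √(1 - s ^ 2)) / s) := by
        rw [hs_def]
        field_simp
    _ ≤ ‖w‖ * (⟪x, e⟫ * s - √(1 - ⟪x, e⟫ ^ 2) * √(1 - s ^ 2)) := by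
        gcongr
        exact div_sub_sqrt_le_mul_sub_sqrt_mul_sqrt hc hs hs1
    _ = ⟪x, e⟫ * ⟪w, e⟫ - √(‖x‖ ^ 2 - ⟪x, e⟫ ^ 2) * √(‖w‖ ^ 2 - ⟪w, e⟫ ^ 2) := by
        rw [hperp, hx, hs_def]
        field_simp
    _ ≤ ⟪x, w⟫ := inner_mul_inner_sub_sqrt_mul_sqrt_le_inner he x w

end InnerProductSpace

theorem stmt_4_general {n : ℕ} (B S : Matrix (Fin n) (Fin n) ℝ) (hB : B.PosDef)
    (hS : S.PosDef) (hSB : S * S = B)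
    (u : Fin n → ℝ) (hu : u ≠ 0)
    (xstar : Fin n → ℝ)
    (hxstar : xstar = (Real.sqrt (u ⬝ᵥ B.mulVec u))⁻¹ • S.mulVec u)
    (φ : ℝ)
    (hφ : φ = Real.arcsin
      ((u ⬝ᵥ u) / (Real.sqrt (u ⬝ᵥ B.mulVec u) * Real.sqrt (u ⬝ᵥ B⁻¹.mulVec u))))
    (x : Fin n → ℝ) (hx : x ⬝ᵥ x = 1) :
    x ⬝ᵥ B⁻¹.mulVec xstar ≥
      (u ⬝ᵥ B⁻¹.mulVec u) / (u ⬝ᵥ u) * (x ⬝ᵥ xstar - Real.cos φ) := by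
  have ha : 0 < u ⬝ᵥ u := by simpa using PosDef.one.dotProduct_mulVec_pos hu
  have hβ : 0 < u ⬝ᵥ B *ᵥ u := by simpa using hB.dotProduct_mulVec_pos hu
  have hγ : 0 < u ⬝ᵥ B⁻¹ *ᵥ u := by simpa using hB.inv.dotProduct_mulVec_pos hu
  set b := √(u ⬝ᵥ B *ᵥ u)
  have hb : 0 < b := Real.sqrt_pos.2 hβ
  have hS_symm := isHermitian_iff_isSymm.1 hS.isHermitian
  have hSS : S⁻¹ * S = 1 := nonsing_inv_mul S ((isUnit_iff_isUnit_det S).1 hS.isUnit)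
  have hBinv : B⁻¹ = S⁻¹ * S⁻¹ := by rw [← hSB, Matrix.mul_inv_rev]
  set w := S⁻¹ *ᵥ u
  have h_xx : xstar ⬝ᵥ xstar = 1 := by
    rw [hxstar, smul_dotProduct, dotProduct_smul, mulVec_dotProduct_mulVec, hS_symm.eq, hSB,
      smul_smul, smul_eq_mul, ← mul_inv, ← sq, Real.sq_sqrt hβ.le, inv_mul_cancel₀ hβ.ne']
  have h_wx : w ⬝ᵥ xstar = u ⬝ᵥ u / b := by
    rw [hxstar, dotProduct_smul, mulVec_dotProduct_mulVec, hS_symm.inv.eq, hSS, one_mulVec,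
      smul_eq_mul, inv_mul_eq_div]
  have h_ww : w ⬝ᵥ w = u ⬝ᵥ B⁻¹ *ᵥ u := by
    rw [mulVec_dotProduct_mulVec, hS_symm.inv.eq, hBinv]
  have h_Bx : B⁻¹ *ᵥ xstar = b⁻¹ • w := by
    rw [hxstar, mulVec_smul, hBinv, mulVec_mulVec, mul_assoc, hSS, mul_one]
  have key := norm_sq_div_inner_mul_sub_le_inner (e := WithLp.toLp 2 xstar)
    (x := WithLp.toLp 2 x) (w := WithLp.toLp 2 w)
    (by rw [EuclideanSpace.norm_toLp, h_xx, Real.sqrt_one])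
    (by rw [EuclideanSpace.norm_toLp, hx, Real.sqrt_one])
    (by rw [EuclideanSpace.real_inner_toLp, h_wx]; exact div_pos ha hb)
  simp only [EuclideanSpace.real_inner_toLp, EuclideanSpace.norm_toLp, h_wx, h_ww,
    Real.sq_sqrt hγ.le, div_div] at key
  rw [hφ, Real.cos_arcsin, h_Bx, dotProduct_smul, smul_eq_mul, ge_iff_le, le_inv_mul_iff₀ hb]
  refine Eq.trans_le ?_ key
  rw [div_div_eq_mul_div]
  ring

theorem stmt_4 {n : ℕ} (B S : Matrix (Fin n) (Fin n) ℝ) (hB : B.PosDef)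
    (hS : S.PosDef) (hSB : S * S = B)
    (u : Fin n → ℝ) (hu : u ≠ 0)
    (xstar : Fin n → ℝ)
    (hxstar : xstar = (Real.sqrt (u ⬝ᵥ B.mulVec u))⁻¹ • S.mulVec u)
    (φ : ℝ)
    (hφ : φ = Real.arcsin
      ((u ⬝ᵥ u) / (Real.sqrt (u ⬝ᵥ B.mulVec u) * Real.sqrt (u ⬝ᵥ B⁻¹.mulVec u))))
    (x : Fin n → ℝ) (hx : x ⬝ᵥ x = 1)
    (hdist : Real.arccos (x ⬝ᵥ xstar) < φ) :
    x ⬝ᵥ B⁻¹.mulVec xstar ≥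
      (u ⬝ᵥ B⁻¹.mulVec u) / (u ⬝ᵥ u) * (x ⬝ᵥ xstar - Real.cos φ) :=
  stmt_4_general B S hB hS hSB u hu xstar hxstar φ hφ x hx
end

section
/- Let B be SPD and u* ≠ 0. Then the supremum of vᵀB⁻¹u*/(‖v‖_{B⁻¹}‖u*‖_{B⁻¹}) over nonzero vectors v with vᵀu* = 0 equals cos φ, where sin φ = ‖u*‖²/(‖u*‖_B‖u*‖_{B⁻¹}) and φ ∈ (0,π/2]. -/
/-!
Put `Q(x, y) = xᵀB⁻¹y` and `w = Bu`. Then `vᵀu = Q(v, w)`, so the admissible `v` are exactly the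
nonzero vectors `Q`-orthogonal to `w`; moreover `Q(w, u) = ‖u‖²` and `Q(w, w) = ‖u‖_B²`, so `sin φ`
is the `Q`-cosine of the angle between `w` and `u`. For `v` orthogonal to `w` we have
`Q(v, u) = Q(v, p)`, where `p = u - (Q(u, w) / Q(w, w)) w` is the `Q`-orthogonal projection of `u`
onto the hyperplane `w^⊥`. Cauchy–Schwarz bounds `Q(v, p)` by `‖v‖_Q ‖p‖_Q`, with equality at
`v = p`, and `‖p‖_Q² = ‖u‖_Q² (1 - sin² φ)`.
-/

open Matrix

namespace LinearMap.BilinForm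

variable {M : Type*} [AddCommGroup M] [Module ℝ M] {Q : LinearMap.BilinForm ℝ M}

noncomputable def cosAngle (Q : LinearMap.BilinForm ℝ M) (x y : M) : ℝ :=
  Q x y / (√(Q x x) * √(Q y y))

lemma apply_le_sqrt_mul_sqrt (hQ : Q.IsSymm) (hQ₀ : ∀ x, 0 ≤ Q x x) (x y : M) :
    Q x y ≤ √(Q x x) * √(Q y y) :=
  calc Q x y ≤ |Q x y| := le_abs_self _
    _ ≤ √(Q x x * Q y y) := Real.abs_le_sqrt (Q.apply_sq_le_of_symm hQ₀ (isSymm_iff.mp hQ) x y)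
    _ = √(Q x x) * √(Q y y) := Real.sqrt_mul (hQ₀ x) _

lemma exists_ne_zero_apply_eq_zero (hM : 1 < Module.finrank ℝ M) (w : M) :
    ∃ v, v ≠ 0 ∧ Q v w = 0 := by
  have : FiniteDimensional ℝ M := Module.finite_of_finrank_pos (by omega)
  have hker : LinearMap.ker (Q.flip w) ≠ ⊥ :=
    LinearMap.ker_ne_bot_of_finrank_lt (by simpa using hM)
  obtain ⟨v, hv, hv0⟩ := (Submodule.ne_bot_iff _).mp hker
  exact ⟨v, hv0, hv⟩

lemma apply_sub_div_smul_eq_zero (hQ : Q.IsSymm) (hQ₀ : ∀ x, 0 ≤ Q x x) (u w : M) :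
    Q (u - (Q u w / Q w w) • w) w = 0 := by
  -- if `Q w w = 0` then also `Q u w = 0`, so the junk value `Q u w / 0 = 0` is harmless
  have hww : Q w w = 0 → Q u w = 0 := fun h ↦ by
    simpa [h] using Q.apply_sq_le_of_symm hQ₀ (isSymm_iff.mp hQ) u w
  rw [map_sub, map_smul, LinearMap.sub_apply, LinearMap.smul_apply, smul_eq_mul,
    div_mul_cancel_of_imp hww, sub_self]

theorem isGreatest_apply_div_sqrt (hQ : Q.IsSymm) (hQ₀ : ∀ x, 0 ≤ Q x x) {w : M}
    (hw : ∃ v, v ≠ 0 ∧ Q v w = 0) (u : M) :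
    IsGreatest {r | ∃ v, v ≠ 0 ∧ Q v w = 0 ∧ r = Q v u / √(Q v v)}
      (√(Q u u - Q u w ^ 2 / Q w w)) := by
  set p := u - (Q u w / Q w w) • w with hp
  have hpw : Q p w = 0 := apply_sub_div_smul_eq_zero hQ hQ₀ u w
  have hvp (v : M) (hv : Q v w = 0) : Q v u = Q v p := by simp [hp, hv]
  have hpp : Q p p = Q u u - Q u w ^ 2 / Q w w := by
    rw [← hvp p hpw, hQ.eq, hp]
    simp only [map_sub, map_smul, smul_eq_mul]
    ring
  rw [← hpp]
  refine ⟨?_, ?_⟩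
  · by_cases hpp0 : Q p p = 0
    · -- `p` is `Q`-null, so by Cauchy–Schwarz every admissible `v` attains the value `0`
      obtain ⟨v, hv, hvw⟩ := hw
      refine ⟨v, hv, hvw, ?_⟩
      have : Q v p = 0 := by
        simpa [hpp0] using Q.apply_sq_le_of_symm hQ₀ (isSymm_iff.mp hQ) v p
      rw [hvp v hvw, this, hpp0, Real.sqrt_zero, zero_div]
    · refine ⟨p, fun h ↦ hpp0 (by simp [h]), hpw, ?_⟩
      rw [hvp p hpw, Real.div_sqrt]
  · rintro _ ⟨v, -, hvw, rfl⟩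
    rw [hvp v hvw]
    rcases (Real.sqrt_nonneg (Q v v)).eq_or_lt with h | h
    · rw [← h, div_zero]
      positivity
    · rw [div_le_iff₀ h, mul_comm]
      exact apply_le_sqrt_mul_sqrt hQ hQ₀ v p

theorem isGreatest_cosAngle (hQ : Q.IsSymm) (hQ₀ : ∀ x, 0 ≤ Q x x) {u w : M}
    (hu : 0 < Q u u) (hw : ∃ v, v ≠ 0 ∧ Q v w = 0) :
    IsGreatest {r | ∃ v, v ≠ 0 ∧ Q v w = 0 ∧ r = Q.cosAngle v u}
      (√(1 - Q.cosAngle w u ^ 2)) := by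
  have hval : √(1 - Q.cosAngle w u ^ 2) = √(Q u u - Q u w ^ 2 / Q w w) / √(Q u u) := by
    rw [← Real.sqrt_div' _ hu.le, sub_div, div_self hu.ne', div_div, cosAngle, div_pow,
      mul_pow, Real.sq_sqrt (hQ₀ w), Real.sq_sqrt hu.le, hQ.eq w u]
  obtain ⟨⟨v, hv, hvw, hr⟩, hub⟩ := isGreatest_apply_div_sqrt hQ hQ₀ hw u
  rw [hval]
  refine ⟨⟨v, hv, hvw, by rw [hr, cosAngle, div_div]⟩, ?_⟩
  rintro _ ⟨v, hv, hvw, rfl⟩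
  rw [cosAngle, ← div_div]
  exact div_le_div_of_nonneg_right (hub ⟨v, hv, hvw, rfl⟩) (Real.sqrt_nonneg _)

end LinearMap.BilinForm

lemma Matrix.IsSymm.isSymm_toLinearMap₂' {ι R : Type*} [Fintype ι] [DecidableEq ι]
    [CommSemiring R] {A : Matrix ι ι R} (hA : A.IsSymm) :
    LinearMap.BilinForm.IsSymm (toLinearMap₂' R A) :=
  ⟨fun x y ↦ by
    rw [toLinearMap₂'_apply', toLinearMap₂'_apply', dotProduct_mulVec, ← mulVec_transpose, hA,
      dotProduct_comm]⟩

theorem stmt_5 {n : ℕ} (hn : 1 < n)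
    (B : Matrix (Fin n) (Fin n) ℝ) (hB : B.PosDef)
    (u : Fin n → ℝ) (hu : u ≠ 0)
    (φ : ℝ)
    (hφ : φ = Real.arcsin
      ((u ⬝ᵥ u) / (Real.sqrt (u ⬝ᵥ B.mulVec u) * Real.sqrt (u ⬝ᵥ B⁻¹.mulVec u)))) :
    IsGreatest
      {r : ℝ | ∃ v : Fin n → ℝ, v ≠ 0 ∧ v ⬝ᵥ u = 0 ∧
        r = (v ⬝ᵥ B⁻¹.mulVec u) /
          (Real.sqrt (v ⬝ᵥ B⁻¹.mulVec v) * Real.sqrt (u ⬝ᵥ B⁻¹.mulVec u))}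
      (Real.cos φ) := by
  let Q : LinearMap.BilinForm ℝ (Fin n → ℝ) := toLinearMap₂' ℝ B⁻¹
  have hQ_apply (x y : Fin n → ℝ) : Q x y = x ⬝ᵥ B⁻¹ *ᵥ y := toLinearMap₂'_apply' _ _ _
  have hQ : Q.IsSymm := (isHermitian_iff_isSymm.mp hB.inv.isHermitian).isSymm_toLinearMap₂'
  have hQ₀ (x : Fin n → ℝ) : 0 ≤ Q x x := by
    simpa [hQ_apply] using hB.inv.posSemidef.dotProduct_mulVec_nonneg x
  have hQB (v : Fin n → ℝ) : Q v (B *ᵥ u) = v ⬝ᵥ u := by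
    rw [hQ_apply, mulVec_mulVec, nonsing_inv_mul _ ((isUnit_iff_isUnit_det B).mp hB.isUnit),
      one_mulVec]
  have huu : 0 < Q u u := by simpa [hQ_apply] using hB.inv.dotProduct_mulVec_pos hu
  have hK : ∃ v, v ≠ 0 ∧ Q v (B *ᵥ u) = 0 :=
    LinearMap.BilinForm.exists_ne_zero_apply_eq_zero (by simpa using hn) _
  have hcos : Real.cos φ = √(1 - Q.cosAngle (B *ᵥ u) u ^ 2) := by
    rw [hφ, Real.cos_arcsin, LinearMap.BilinForm.cosAngle, hQ.eq, hQB, hQB,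
      dotProduct_comm (B *ᵥ u), hQ_apply]
  rw [hcos]
  simpa only [hQB, LinearMap.BilinForm.cosAngle, hQ_apply] using
    LinearMap.BilinForm.isGreatest_cosAngle hQ hQ₀ huu hK
end

section
/- Let A, B be SPD with A having smallest eigenvalue λ₁ (simple) and eigenvector u*, and let x* = B^{1/2}u*/‖B^{1/2}u*‖. For f(x) = −(xᵀB⁻¹x)/(xᵀB^{-1/2}AB^{-1/2}x) one has, for any unit vector x: ∇f(x)ᵀx* = −(2λ₁ xᵀB⁻¹x*/‖A^{1/2}B^{-1/2}x‖²)·(f(x) − f(x*)), where f(x*) = −1/λ₁. -/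
/-!
With `R = B^{-1/2}` and `S = B^{1/2}`, uniqueness of positive semidefinite square roots gives
`R * S = 1`, so `x*` is an eigenvector of the pencil `(R A R, B⁻¹)`:
`R A R x* = λ₁ B⁻¹ x*`. Since both matrices are symmetric, pairing the gradient with `x*` gives
`-(2 / D) (xᵀB⁻¹x* + f λ₁ xᵀB⁻¹x*)` with `D = xᵀ R A R x`, which factors as claimed.
-/

open Matrix

namespace Matrix
variable {n : Type*} [Fintype n]

open scoped MatrixOrder ComplexOrder in
theorem PosSemidef.eq_inv_of_mul_self_eq_inv {𝕜 : Type*} [RCLike 𝕜] [DecidableEq n]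
    {R S : Matrix n n 𝕜} (hR : R.PosSemidef) (hS : S.PosSemidef) (h : R * R = (S * S)⁻¹) :
    R = S⁻¹ :=
  (CFC.sq_eq_sq_iff R S⁻¹ hR.nonneg hS.inv.nonneg).mp <| by rw [sq, sq, h, mul_inv_rev]

section CommSemiring
variable {K : Type*} [CommSemiring K]

theorem IsSymm.mulVec_dotProduct {M : Matrix n n K} (hM : M.IsSymm) (v w : n → K) :
    M *ᵥ v ⬝ᵥ w = v ⬝ᵥ M *ᵥ w := by
  rw [← vecMul_transpose, hM.eq, dotProduct_mulVec]

theorem IsSymm.mul_mul_self {R A : Matrix n n K} (hR : R.IsSymm) (hA : A.IsSymm) :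
    (R * A * R).IsSymm := by
  rw [IsSymm, transpose_mul, transpose_mul, hR.eq, hA.eq, mul_assoc]

theorem mulVec_mulVec_eq_smul_of_mul_eq_one [DecidableEq n] {R S A : Matrix n n K}
    (hRS : R * S = 1) {lam : K} {u : n → K} (hAu : A *ᵥ u = lam • u) :
    (R * A * R) *ᵥ (S *ᵥ u) = lam • (R * R) *ᵥ (S *ᵥ u) := by
  rw [mulVec_mulVec, mulVec_mulVec, mul_assoc (R * A), mul_assoc R R, hRS, mul_one, mul_one,
    ← mulVec_mulVec, hAu, mulVec_smul]

end CommSemiring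

theorem smul_add_dotProduct_of_mulVec_eq_smul {K : Type*} [Field K] {P M : Matrix n n K}
    (hP : P.IsSymm) (hM : M.IsSymm) {lam : K} (hlam : lam ≠ 0) {v : n → K}
    (hv : M *ᵥ v = lam • P *ᵥ v) (x : n → K) (f D : K) :
    (-2 / D) • (P *ᵥ x + f • M *ᵥ x) ⬝ᵥ v = -(2 * lam * (x ⬝ᵥ P *ᵥ v) / D) * (f - (-1 / lam)) := by
  rw [smul_dotProduct, add_dotProduct, smul_dotProduct, hP.mulVec_dotProduct,
    hM.mulVec_dotProduct, hv, dotProduct_smul, smul_eq_mul, smul_eq_mul, smul_eq_mul]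
  field_simp
  ring

end Matrix

theorem stmt_9_general {n : ℕ} (A B S R : Matrix (Fin n) (Fin n) ℝ)
    (hA : A.PosDef)
    (hS : S.PosDef) (hSB : S * S = B)
    (hR : R.PosDef) (hRB : R * R = B⁻¹)
    (lam₁ : ℝ) (hlam₁ : 0 < lam₁)
    (u : Fin n → ℝ) (hAu : A.mulVec u = lam₁ • u)
    (xstar : Fin n → ℝ)
    (hxstar : xstar = (Real.sqrt (u ⬝ᵥ B.mulVec u))⁻¹ • S.mulVec u)
    (x : Fin n → ℝ)
    (f : ℝ)
    (g : Fin n → ℝ)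
    (hg : g = (-2 / (x ⬝ᵥ (R * A * R).mulVec x)) •
      (B⁻¹.mulVec x + f • (R * A * R).mulVec x)) :
    g ⬝ᵥ xstar =
      -(2 * lam₁ * (x ⬝ᵥ B⁻¹.mulVec xstar) / (x ⬝ᵥ (R * A * R).mulVec x)) *
        (f - (-1 / lam₁)) := by
  have hRsymm : R.IsSymm := isHermitian_iff_isSymm.mp hR.isHermitian
  have hRS : R * S = 1 := by
    rw [hR.posSemidef.eq_inv_of_mul_self_eq_inv hS.posSemidef (hSB ▸ hRB)]
    exact nonsing_inv_mul S hS.det_pos.ne'.isUnit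
  have hxstar_eig : (R * A * R) *ᵥ xstar = lam₁ • B⁻¹ *ᵥ xstar := by
    rw [hxstar, mulVec_smul, mulVec_smul, mulVec_mulVec_eq_smul_of_mul_eq_one hRS hAu, hRB,
      smul_comm]
  have hBinv_symm : B⁻¹.IsSymm := by rw [← hRB, IsSymm, transpose_mul, hRsymm.eq]
  rw [hg]
  exact smul_add_dotProduct_of_mulVec_eq_smul hBinv_symm
    (hRsymm.mul_mul_self (isHermitian_iff_isSymm.mp hA.isHermitian)) hlam₁.ne' hxstar_eig x f _

theorem stmt_9 {n : ℕ} (A B S R : Matrix (Fin n) (Fin n) ℝ)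
    (hA : A.PosDef) (hB : B.PosDef)
    (hS : S.PosDef) (hSB : S * S = B)
    (hR : R.PosDef) (hRB : R * R = B⁻¹)
    (lam₁ : ℝ) (hlam₁ : 0 < lam₁)
    (hlam₁min : ∀ y : Fin n → ℝ, lam₁ * (y ⬝ᵥ y) ≤ y ⬝ᵥ A.mulVec y)
    (u : Fin n → ℝ) (hu : u ≠ 0) (hAu : A.mulVec u = lam₁ • u)
    (xstar : Fin n → ℝ)
    (hxstar : xstar = (Real.sqrt (u ⬝ᵥ B.mulVec u))⁻¹ • S.mulVec u)
    (x : Fin n → ℝ) (hx : x ⬝ᵥ x = 1)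
    (f : ℝ) (hf : f = -(x ⬝ᵥ B⁻¹.mulVec x) / (x ⬝ᵥ (R * A * R).mulVec x))
    (g : Fin n → ℝ)
    (hg : g = (-2 / (x ⬝ᵥ (R * A * R).mulVec x)) •
      (B⁻¹.mulVec x + f • (R * A * R).mulVec x)) :
    g ⬝ᵥ xstar =
      -(2 * lam₁ * (x ⬝ᵥ B⁻¹.mulVec xstar) / (x ⬝ᵥ (R * A * R).mulVec x)) *
        (f - (-1 / lam₁)) :=
  stmt_9_general A B S R hA hS hSB hR hRB lam₁ hlam₁ u hAu xstar hxstar x f g hg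
end

section
/- Let A, B be SPD, λ₁ < λ₂ ≤ ... ≤ λₙ the eigenvalues of A, ν_min, ν_max the extreme eigenvalues of AB⁻¹, κ_ν = ν_max/ν_min. Let u* be the unit eigenvector of A for λ₁, x* = B^{1/2}u*/‖B^{1/2}u*‖, and f(x) = −(xᵀB⁻¹x)/(xᵀB^{-1/2}AB^{-1/2}x). Then for every unit vector x with xᵀx* ≥ 0: f(x) − f(x*) ≥ μ₀/2 · dist²(x,x*), where μ₀ = 8(λ₁⁻¹ − λ₂⁻¹)/(π²κ_ν) and dist(x,x*) = arccos(xᵀx*). -/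
/-!
Write `y = B^{-1/2} x`, so that `yᵀBy = 1` and `f(x) = -(yᵀy)/(yᵀAy)`. Splitting off the
`u*`-component of `y`, the spectral gap `λ₁ < λ₂` bounds `yᵀAy/λ₁ - yᵀy` from below by
`(λ₁⁻¹ - λ₂⁻¹)` times the `A`-energy of the remainder `w`, and the equivalence of `A` and `B`
together with Cauchy–Schwarz in the `B`-inner product turns this into
`(λ₁⁻¹ - λ₂⁻¹) ν_min (1 - cos² θ)`, where `cos θ = xᵀx*`. Dividing by `yᵀAy ≤ ν_max` and using
Jordan's inequality `sin θ ≥ 2θ/π` on `[0, π/2]` gives the quadratic growth.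
-/

open Matrix

open Real in
theorem Real.sq_two_div_pi_mul_arccos_le {c : ℝ} (hc₀ : 0 ≤ c) (hc₁ : c ≤ 1) :
    (2 / π * arccos c) ^ 2 ≤ 1 - c ^ 2 := by
  have hsin : sin (arccos c) ^ 2 = 1 - c ^ 2 := by
    rw [sin_arccos, sq_sqrt (by nlinarith)]
  rw [← hsin]
  exact pow_le_pow_left₀ (by have := arccos_nonneg c; positivity)
    (mul_le_sin (arccos_nonneg c) (arccos_le_pi_div_two.mpr hc₀)) 2

theorem Matrix.PosDef.isSymm {ι : Type*} {M : Matrix ι ι ℝ} (hM : M.PosDef) : M.IsSymm :=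
  isHermitian_iff_isSymm.mp hM.1

section
variable {ι : Type*} [Fintype ι]

theorem dotProduct_self_nonneg (v : ι → ℝ) : 0 ≤ v ⬝ᵥ v := by
  simpa using dotProduct_self_star_nonneg v

theorem dotProduct_self_inv_sqrt_smul {v : ι → ℝ} (hv : v ⬝ᵥ v ≠ 0) :
    ((√(v ⬝ᵥ v))⁻¹ • v) ⬝ᵥ ((√(v ⬝ᵥ v))⁻¹ • v) = 1 := by
  rw [smul_dotProduct, dotProduct_smul, smul_eq_mul, smul_eq_mul, ← mul_assoc, ← mul_inv,
    Real.mul_self_sqrt (dotProduct_self_nonneg v), inv_mul_cancel₀ hv]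

theorem dotProduct_le_one_of_dotProduct_self_eq_one {x v : ι → ℝ} (hx : x ⬝ᵥ x = 1)
    (hv : v ⬝ᵥ v = 1) : x ⬝ᵥ v ≤ 1 := by
  have := dotProduct_self_nonneg (x - v)
  simp only [dotProduct_sub, sub_dotProduct, hx, hv, dotProduct_comm v x] at this
  linarith

theorem Matrix.dotProduct_transpose_mul_mul_mulVec (R M : Matrix ι ι ℝ) (x : ι → ℝ) :
    x ⬝ᵥ (Rᵀ * M * R) *ᵥ x = (R *ᵥ x) ⬝ᵥ M *ᵥ (R *ᵥ x) := by
  rw [← mulVec_mulVec, ← mulVec_mulVec, dotProduct_transpose_mulVec, dotProduct_comm]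

theorem Matrix.dotProduct_transpose_mul_self_mulVec (R : Matrix ι ι ℝ) (x : ι → ℝ) :
    x ⬝ᵥ (Rᵀ * R) *ᵥ x = (R *ᵥ x) ⬝ᵥ (R *ᵥ x) := by
  rw [← mulVec_mulVec, dotProduct_transpose_mulVec, dotProduct_comm]

theorem Matrix.IsSymm.dotProduct_mulVec_comm {M : Matrix ι ι ℝ} (hM : M.IsSymm) (v w : ι → ℝ) :
    v ⬝ᵥ M *ᵥ w = w ⬝ᵥ M *ᵥ v := by
  rw [← dotProduct_transpose_mulVec, hM.eq]

theorem Matrix.IsSymm.sub_sq_le_mul_dotProduct_mulVec_sub_smul {B : Matrix ι ι ℝ}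
    (hB : B.IsSymm) (u y : ι → ℝ) (a : ℝ) :
    (u ⬝ᵥ B *ᵥ u) * (y ⬝ᵥ B *ᵥ y) - (u ⬝ᵥ B *ᵥ y) ^ 2 ≤
      (u ⬝ᵥ B *ᵥ u) * ((y - a • u) ⬝ᵥ B *ᵥ (y - a • u)) := by
  have := hB.dotProduct_mulVec_comm y u
  simp only [mulVec_sub, mulVec_smul, dotProduct_sub, sub_dotProduct, dotProduct_smul,
    smul_dotProduct, smul_eq_mul, this]
  nlinarith [sq_nonneg (a * (u ⬝ᵥ B *ᵥ u) - u ⬝ᵥ B *ᵥ y)]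

variable {A : Matrix ι ι ℝ} {u : ι → ℝ}

theorem dotProduct_self_eq_sub_proj_add (hu : u ⬝ᵥ u = 1) (y : ι → ℝ) :
    y ⬝ᵥ y = (y - (y ⬝ᵥ u) • u) ⬝ᵥ (y - (y ⬝ᵥ u) • u) + (y ⬝ᵥ u) ^ 2 := by
  simp only [dotProduct_sub, sub_dotProduct, dotProduct_smul, smul_dotProduct, smul_eq_mul, hu,
    dotProduct_comm u y]
  ring

theorem Matrix.IsSymm.dotProduct_mulVec_eq_sub_proj_add {lam : ℝ} (hA : A.IsSymm)
    (hu : u ⬝ᵥ u = 1) (hAu : A *ᵥ u = lam • u) (y : ι → ℝ) :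
    y ⬝ᵥ A *ᵥ y =
      (y - (y ⬝ᵥ u) • u) ⬝ᵥ A *ᵥ (y - (y ⬝ᵥ u) • u) + lam * (y ⬝ᵥ u) ^ 2 := by
  have huAy : u ⬝ᵥ A *ᵥ y = lam * (y ⬝ᵥ u) := by
    rw [hA.dotProduct_mulVec_comm, hAu, dotProduct_smul, smul_eq_mul]
  simp only [mulVec_sub, mulVec_smul, dotProduct_sub, sub_dotProduct, dotProduct_smul,
    smul_dotProduct, smul_eq_mul, huAy, hAu, hu]
  ring

theorem Matrix.IsSymm.gap_mul_dotProduct_mulVec_sub_proj_le {lam₁ lam₂ : ℝ} (hA : A.IsSymm)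
    (hu : u ⬝ᵥ u = 1) (hAu : A *ᵥ u = lam₁ • u) (hlam₁ : lam₁ ≠ 0) (hlam₂ : 0 < lam₂)
    (hsecond : ∀ y : ι → ℝ, y ⬝ᵥ u = 0 → lam₂ * (y ⬝ᵥ y) ≤ y ⬝ᵥ A *ᵥ y) (y : ι → ℝ) :
    (1 / lam₁ - 1 / lam₂) * ((y - (y ⬝ᵥ u) • u) ⬝ᵥ A *ᵥ (y - (y ⬝ᵥ u) • u)) ≤
      y ⬝ᵥ A *ᵥ y / lam₁ - y ⬝ᵥ y := by
  set w := y - (y ⬝ᵥ u) • u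
  have hwu : w ⬝ᵥ u = 0 := by simp [w, hu]
  have hw : w ⬝ᵥ w ≤ w ⬝ᵥ A *ᵥ w / lam₂ := by
    rw [le_div_iff₀ hlam₂, mul_comm]; exact hsecond w hwu
  have hsplit : (w ⬝ᵥ A *ᵥ w + lam₁ * (y ⬝ᵥ u) ^ 2) / lam₁ - (w ⬝ᵥ w + (y ⬝ᵥ u) ^ 2) =
      w ⬝ᵥ A *ᵥ w / lam₁ - w ⬝ᵥ w := by
    field_simp; ring
  rw [hA.dotProduct_mulVec_eq_sub_proj_add hu hAu y, dotProduct_self_eq_sub_proj_add hu y, hsplit]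
  linarith [show (1 / lam₁ - 1 / lam₂) * (w ⬝ᵥ A *ᵥ w) =
    w ⬝ᵥ A *ᵥ w / lam₁ - w ⬝ᵥ A *ᵥ w / lam₂ by ring]

theorem Matrix.PosDef.le_inv_sub_dotProduct_div_dotProduct_mulVec {B : Matrix ι ι ℝ}
    {lam₁ lam₂ νmin νmax : ℝ} (hA : A.PosDef) (hB : B.PosDef) (hu : u ⬝ᵥ u = 1)
    (hAu : A *ᵥ u = lam₁ • u) (hlam₁ : 0 < lam₁) (hgap : lam₁ < lam₂)
    (hsecond : ∀ y : ι → ℝ, y ⬝ᵥ u = 0 → lam₂ * (y ⬝ᵥ y) ≤ y ⬝ᵥ A *ᵥ y)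
    (hνmin : 0 < νmin)
    (hspec : ∀ y : ι → ℝ,
      νmin * (y ⬝ᵥ B *ᵥ y) ≤ y ⬝ᵥ A *ᵥ y ∧ y ⬝ᵥ A *ᵥ y ≤ νmax * (y ⬝ᵥ B *ᵥ y))
    {y : ι → ℝ} (hy : y ⬝ᵥ B *ᵥ y = 1) :
    (1 / lam₁ - 1 / lam₂) * (νmin / νmax) * (1 - (u ⬝ᵥ B *ᵥ y) ^ 2 / (u ⬝ᵥ B *ᵥ u)) ≤
      1 / lam₁ - y ⬝ᵥ y / y ⬝ᵥ A *ᵥ y := by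
  set w := y - (y ⬝ᵥ u) • u
  set D := y ⬝ᵥ A *ᵥ y
  have hgap₀ : 0 ≤ 1 / lam₁ - 1 / lam₂ := sub_nonneg.mpr (one_div_le_one_div_of_le hlam₁ hgap.le)
  have hD : νmin ≤ D ∧ D ≤ νmax := by simpa [hy] using hspec y
  have hDpos : 0 < D := hνmin.trans_le hD.1
  have hu₀ : u ≠ 0 := by rintro rfl; simp at hu
  have hq : 0 < u ⬝ᵥ B *ᵥ u := by simpa using hB.dotProduct_mulVec_pos hu₀
  have hwB : 1 - (u ⬝ᵥ B *ᵥ y) ^ 2 / (u ⬝ᵥ B *ᵥ u) ≤ w ⬝ᵥ B *ᵥ w := by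
    have := hB.isSymm.sub_sq_le_mul_dotProduct_mulVec_sub_smul u y (y ⬝ᵥ u)
    rw [hy, mul_one] at this
    rw [one_sub_div hq.ne', div_le_iff₀ hq, mul_comm]; exact this
  have hwA : νmin * (w ⬝ᵥ B *ᵥ w) ≤ w ⬝ᵥ A *ᵥ w := (hspec w).1
  have hwA₀ : 0 ≤ w ⬝ᵥ A *ᵥ w := by simpa using hA.posSemidef.dotProduct_mulVec_nonneg w
  have hN := hA.isSymm.gap_mul_dotProduct_mulVec_sub_proj_le hu hAu hlam₁.ne' (hlam₁.trans hgap)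
    hsecond y
  calc (1 / lam₁ - 1 / lam₂) * (νmin / νmax) * (1 - (u ⬝ᵥ B *ᵥ y) ^ 2 / (u ⬝ᵥ B *ᵥ u))
      = (1 / lam₁ - 1 / lam₂) * (νmin * (1 - (u ⬝ᵥ B *ᵥ y) ^ 2 / (u ⬝ᵥ B *ᵥ u))) / νmax := by
        ring
    _ ≤ (1 / lam₁ - 1 / lam₂) * (w ⬝ᵥ A *ᵥ w) / νmax := by
        gcongr
        · exact hDpos.le.trans hD.2
        · exact (mul_le_mul_of_nonneg_left hwB hνmin.le).trans hwA
    _ ≤ (D / lam₁ - y ⬝ᵥ y) / νmax := by gcongr; exact hDpos.le.trans hD.2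
    _ ≤ (D / lam₁ - y ⬝ᵥ y) / D :=
        div_le_div_of_nonneg_left ((mul_nonneg hgap₀ hwA₀).trans hN) hDpos hD.2
    _ = 1 / lam₁ - y ⬝ᵥ y / D := by rw [sub_div, div_right_comm, div_self hDpos.ne']

theorem Matrix.PosDef.mul_sq_arccos_le_inv_sub_dotProduct_div_dotProduct_mulVec
    {B : Matrix ι ι ℝ} {lam₁ lam₂ νmin νmax : ℝ}
    (hA : A.PosDef) (hB : B.PosDef) (hu : u ⬝ᵥ u = 1)
    (hAu : A *ᵥ u = lam₁ • u) (hlam₁ : 0 < lam₁) (hgap : lam₁ < lam₂)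
    (hsecond : ∀ y : ι → ℝ, y ⬝ᵥ u = 0 → lam₂ * (y ⬝ᵥ y) ≤ y ⬝ᵥ A *ᵥ y)
    (hνmin : 0 < νmin) (hνmax : 0 < νmax)
    (hspec : ∀ y : ι → ℝ,
      νmin * (y ⬝ᵥ B *ᵥ y) ≤ y ⬝ᵥ A *ᵥ y ∧ y ⬝ᵥ A *ᵥ y ≤ νmax * (y ⬝ᵥ B *ᵥ y))
    {y : ι → ℝ} (hy : y ⬝ᵥ B *ᵥ y = 1) {c : ℝ} (hc₀ : 0 ≤ c) (hc₁ : c ≤ 1)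
    (hc : (u ⬝ᵥ B *ᵥ y) ^ 2 = c ^ 2 * (u ⬝ᵥ B *ᵥ u)) :
    8 * (1 / lam₁ - 1 / lam₂) / (Real.pi ^ 2 * (νmax / νmin)) / 2 * Real.arccos c ^ 2 ≤
      1 / lam₁ - y ⬝ᵥ y / y ⬝ᵥ A *ᵥ y := by
  have hq : u ⬝ᵥ B *ᵥ u ≠ 0 := by
    simpa using (hB.dotProduct_mulVec_pos (x := u) (by rintro rfl; simp at hu)).ne'
  have hK : 0 ≤ (1 / lam₁ - 1 / lam₂) * (νmin / νmax) :=
    mul_nonneg (sub_nonneg.mpr (one_div_le_one_div_of_le hlam₁ hgap.le)) (by positivity)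
  calc 8 * (1 / lam₁ - 1 / lam₂) / (Real.pi ^ 2 * (νmax / νmin)) / 2 * Real.arccos c ^ 2
      = (1 / lam₁ - 1 / lam₂) * (νmin / νmax) * (2 / Real.pi * Real.arccos c) ^ 2 := by
        field_simp; ring
    _ ≤ (1 / lam₁ - 1 / lam₂) * (νmin / νmax) * (1 - (u ⬝ᵥ B *ᵥ y) ^ 2 / (u ⬝ᵥ B *ᵥ u)) := by
        rw [hc, mul_div_cancel_right₀ _ hq]
        exact mul_le_mul_of_nonneg_left (Real.sq_two_div_pi_mul_arccos_le hc₀ hc₁) hK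
    _ ≤ 1 / lam₁ - y ⬝ᵥ y / y ⬝ᵥ A *ᵥ y :=
        hA.le_inv_sub_dotProduct_div_dotProduct_mulVec hB hu hAu hlam₁ hgap hsecond hνmin hspec hy
end

open scoped MatrixOrder ComplexOrder in
theorem Matrix.PosDef.mul_eq_one_of_mul_self_eq_inv {ι 𝕜 : Type*} [Fintype ι] [DecidableEq ι]
    [RCLike 𝕜] {S R : Matrix ι ι 𝕜} (hS : S.PosDef) (hR : R.PosDef) (h : S * S = (R * R)⁻¹) :
    S * R = 1 := by
  have : S = R⁻¹ := (CFC.sq_eq_sq_iff S R⁻¹ hS.posSemidef.nonneg hR.inv.posSemidef.nonneg).mp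
    (by rw [sq, sq, h, mul_inv_rev])
  rw [this, nonsing_inv_mul _ (isUnit_iff_ne_zero.mpr hR.det_pos.ne')]

theorem stmt_12_general {n : ℕ} (A B S R : Matrix (Fin n) (Fin n) ℝ)
    (hA : A.PosDef) (hB : B.PosDef)
    (hS : S.PosDef) (hSB : S * S = B)
    (hR : R.PosDef) (hRB : R * R = B⁻¹)
    (lam₁ lam₂ : ℝ) (hlam₁ : 0 < lam₁) (hgap : lam₁ < lam₂)
    (u : Fin n → ℝ) (hu : u ⬝ᵥ u = 1) (hAu : A.mulVec u = lam₁ • u)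
    (hsecond : ∀ y : Fin n → ℝ, y ⬝ᵥ u = 0 → lam₂ * (y ⬝ᵥ y) ≤ y ⬝ᵥ A.mulVec y)
    (νmin νmax : ℝ) (hνmin : 0 < νmin) (hνmax : 0 < νmax)
    (hspec : ∀ y : Fin n → ℝ,
      νmin * (y ⬝ᵥ B.mulVec y) ≤ y ⬝ᵥ A.mulVec y ∧
        y ⬝ᵥ A.mulVec y ≤ νmax * (y ⬝ᵥ B.mulVec y))
    (xstar : Fin n → ℝ)
    (hxstar : xstar = (Real.sqrt (u ⬝ᵥ B.mulVec u))⁻¹ • S.mulVec u)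
    (x : Fin n → ℝ) (hx : x ⬝ᵥ x = 1) (hxx : 0 ≤ x ⬝ᵥ xstar)
    (f fstar μ₀ : ℝ)
    (hf : f = -(x ⬝ᵥ B⁻¹.mulVec x) / (x ⬝ᵥ (R * A * R).mulVec x))
    (hfstar : fstar = -1 / lam₁)
    (hμ₀ : μ₀ = 8 * (1 / lam₁ - 1 / lam₂) / (Real.pi ^ 2 * (νmax / νmin))) :
    f - fstar ≥ μ₀ / 2 * (Real.arccos (x ⬝ᵥ xstar)) ^ 2 := by
  have hRsymm : Rᵀ = R := hR.isSymm.eq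
  have hSsymm : S.IsSymm := hS.isSymm
  have hSR : S * R = 1 := hS.mul_eq_one_of_mul_self_eq_inv hR <| by
    rw [hSB, hRB, nonsing_inv_nonsing_inv _ (isUnit_iff_ne_zero.mpr hB.det_pos.ne')]
  set y := R *ᵥ x
  set c := x ⬝ᵥ xstar with hc
  have hy : y ⬝ᵥ B *ᵥ y = 1 := by
    rw [← dotProduct_transpose_mul_mul_mulVec, hRsymm, ← hSB, ← mul_assoc R,
      mul_eq_one_comm.mp hSR, one_mul, hSR, one_mulVec, hx]
  have hyy : x ⬝ᵥ B⁻¹ *ᵥ x = y ⬝ᵥ y := by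
    rw [← hRB, ← dotProduct_transpose_mul_self_mulVec, hRsymm]
  have hyA : x ⬝ᵥ (R * A * R) *ᵥ x = y ⬝ᵥ A *ᵥ y := by
    rw [← dotProduct_transpose_mul_mul_mulVec, hRsymm]
  have hBu : u ⬝ᵥ B *ᵥ u = (S *ᵥ u) ⬝ᵥ (S *ᵥ u) := by
    rw [← hSB, ← dotProduct_transpose_mul_self_mulVec, hSsymm.eq]
  have hq : (S *ᵥ u) ⬝ᵥ (S *ᵥ u) ≠ 0 := by
    rw [← hBu]; simpa using (hB.dotProduct_mulVec_pos (x := u) (by rintro rfl; simp at hu)).ne'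
  rw [hBu] at hxstar
  have huBy : u ⬝ᵥ B *ᵥ y = c * √((S *ᵥ u) ⬝ᵥ (S *ᵥ u)) := by
    rw [mulVec_mulVec, ← hSB, mul_assoc, hSR, mul_one, hSsymm.dotProduct_mulVec_comm, hc, hxstar,
      dotProduct_smul, smul_eq_mul, mul_comm _ (x ⬝ᵥ _),
      inv_mul_cancel_right₀ (Real.sqrt_ne_zero'.mpr ((dotProduct_self_nonneg _).lt_of_ne' hq))]
  have hc₁ : c ≤ 1 :=
    dotProduct_le_one_of_dotProduct_self_eq_one hx (hxstar ▸ dotProduct_self_inv_sqrt_smul hq)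
  have hcu : (u ⬝ᵥ B *ᵥ y) ^ 2 = c ^ 2 * (u ⬝ᵥ B *ᵥ u) := by
    rw [huBy, hBu, mul_pow, Real.sq_sqrt (dotProduct_self_nonneg _)]
  rw [hf, hfstar, hyy, hyA, hμ₀, ge_iff_le]
  refine (hA.mul_sq_arccos_le_inv_sub_dotProduct_div_dotProduct_mulVec hB hu hAu hlam₁ hgap
    hsecond hνmin hνmax hspec hy hxx hc₁ hcu).trans_eq ?_
  ring

theorem stmt_12 {n : ℕ} (A B S R : Matrix (Fin n) (Fin n) ℝ)
    (hA : A.PosDef) (hB : B.PosDef)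
    (hS : S.PosDef) (hSB : S * S = B)
    (hR : R.PosDef) (hRB : R * R = B⁻¹)
    (lam₁ lam₂ : ℝ) (hlam₁ : 0 < lam₁) (hgap : lam₁ < lam₂)
    (u : Fin n → ℝ) (hu : u ⬝ᵥ u = 1) (hAu : A.mulVec u = lam₁ • u)
    (hmin : ∀ y : Fin n → ℝ, lam₁ * (y ⬝ᵥ y) ≤ y ⬝ᵥ A.mulVec y)
    (hsecond : ∀ y : Fin n → ℝ, y ⬝ᵥ u = 0 → lam₂ * (y ⬝ᵥ y) ≤ y ⬝ᵥ A.mulVec y)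
    (νmin νmax : ℝ) (hνmin : 0 < νmin) (hνmax : 0 < νmax)
    (hspec : ∀ y : Fin n → ℝ,
      νmin * (y ⬝ᵥ B.mulVec y) ≤ y ⬝ᵥ A.mulVec y ∧
        y ⬝ᵥ A.mulVec y ≤ νmax * (y ⬝ᵥ B.mulVec y))
    (xstar : Fin n → ℝ)
    (hxstar : xstar = (Real.sqrt (u ⬝ᵥ B.mulVec u))⁻¹ • S.mulVec u)
    (x : Fin n → ℝ) (hx : x ⬝ᵥ x = 1) (hxx : 0 ≤ x ⬝ᵥ xstar)
    (f fstar μ₀ : ℝ)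
    (hf : f = -(x ⬝ᵥ B⁻¹.mulVec x) / (x ⬝ᵥ (R * A * R).mulVec x))
    (hfstar : fstar = -1 / lam₁)
    (hμ₀ : μ₀ = 8 * (1 / lam₁ - 1 / lam₂) / (Real.pi ^ 2 * (νmax / νmin))) :
    f - fstar ≥ μ₀ / 2 * (Real.arccos (x ⬝ᵥ xstar)) ^ 2 :=
  stmt_12_general A B S R hA hB hS hSB hR hRB lam₁ lam₂ hlam₁ hgap u hu hAu hsecond νmin νmax hνmin
    hνmax hspec xstar hxstar x hx hxx f fstar μ₀ hf hfstar hμ₀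
end

section
/- For any φ ∈ (0, π/2], κ ≥ 1 with 1/κ ≤ sin²φ, and any c with 0 < c < 1/2, it holds that (cos φ + c·sin²φ)² ≤ 1 − (1 − 2c)/κ. -/
theorem stmt_16 (φ κ c : ℝ) (hφ0 : 0 < φ) (hφ : φ ≤ Real.pi / 2)
    (hκ : 1 ≤ κ) (hsin : 1 / κ ≤ Real.sin φ ^ 2)
    (hc0 : 0 < c) (hc : c < 1 / 2) :
    (Real.cos φ + c * Real.sin φ ^ 2) ^ 2 ≤ 1 - (1 - 2 * c) / κ := by
  have hκ0 : (0:ℝ) < κ := lt_of_lt_of_le one_pos hκ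
  have hcos : 0 ≤ Real.cos φ := Real.cos_nonneg_of_mem_Icc ⟨by linarith [Real.pi_pos], hφ⟩
  set u := Real.cos φ with hu
  set s := Real.sin φ ^ 2 with hs
  have hpyth : s = 1 - u ^ 2 := by
    have := Real.sin_sq_add_cos_sq φ; simp [hs, hu]; linarith
  have hks : 1 ≤ κ * s := by
    rw [div_le_iff₀ hκ0] at hsin; linarith
  have hmid : (u + s / 2) ^ 2 ≤ 1 := by
    nlinarith [sq_nonneg (1 - u), sq_nonneg u]
  have key : κ * (u + c * s) ^ 2 ≤ κ - (1 - 2 * c) := by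
    rw [hpyth] at hks hmid ⊢
    nlinarith [mul_nonneg (by linarith : (0:ℝ) ≤ 1 - 2 * c)
        (by linarith : (0:ℝ) ≤ κ * (1 - u ^ 2) - 1),
      mul_nonneg hc0.le (mul_nonneg hκ0.le
        (by linarith : (0:ℝ) ≤ 1 - (u + (1 - u ^ 2) / 2) ^ 2)),
      mul_nonneg (mul_nonneg hc0.le (by linarith : (0:ℝ) ≤ 1 / 2 - c))
        (mul_nonneg hκ0.le (sq_nonneg (1 - u ^ 2)))]
  have h2 : (1 - 2 * c) / κ ≤ 1 - (u + c * s) ^ 2 := by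
    rw [div_le_iff₀ hκ0]; nlinarith [key]
  linarith
end
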